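/- arXiv:2302.10363 — 3 statements merged into one kernel-verified Lean document; each statement's English description precedes it below -/
import Mathlib

section
/- (Proposition 2 of the paper.) Let N, B, D ≥ 1 and fix points Z : Fin N → ℝ^D. On a probability space Ω, let I, J : Ω → (Fin B → Fin N) be measurable random index tuples such that I and J are independent and, for each k ∈ Fin B, the coordinate ω ↦ J(ω)(k) is uniformly distributed on Fin N. Let u_B ∈ ℝ^B and u_N ∈ ℝ^N be the uniform probability vectors. Define the random variables W(ω) := OT_{G(ω)}(u_B, u_B) with G(ω)[k,l] = ‖Z(I(ω)(k)) − Z(J(ω)(l))‖², and V(ω) := OT_{H(ω)}(u_B, u_N) with H(ω)[k,j] = ‖Z(I(ω)(k)) − Z(j)‖². Then E[W] ≥ E[V]; i.e., the expected squared 2-Wasserstein distance between the empirical measures of two independently sampled mini-batches is at least the expected squared 2-Wasserstein distance between the empirical measure of one mini-batch and the empirical measure of all N points. -/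
open scoped BigOperators ENNReal
open MeasureTheory

/-- Discrete optimal transport value between probability vectors `a` and `b`
with cost matrix `G`: the infimum of `⟨P, G⟩` over nonnegative matrices `P`
with row sums `a` and column sums `b`. -/
noncomputable def OT {m n : ℕ} (G : Fin m → Fin n → ℝ) (a : Fin m → ℝ) (b : Fin n → ℝ) : ℝ :=
  sInf { c : ℝ | ∃ P : Fin m → Fin n → ℝ,
    (∀ i j, 0 ≤ P i j) ∧ (∀ i, ∑ j, P i j = a i) ∧ (∀ j, ∑ i, P i j = b j) ∧
    c = ∑ i, ∑ j, P i j * G i j }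

lemma OT_le_cost {m n : ℕ} {G : Fin m → Fin n → ℝ} (hG : ∀ i j, 0 ≤ G i j)
    {a : Fin m → ℝ} {b : Fin n → ℝ} {P : Fin m → Fin n → ℝ}
    (h0 : ∀ i j, 0 ≤ P i j) (hr : ∀ i, ∑ j, P i j = a i) (hc : ∀ j, ∑ i, P i j = b j) :
    OT G a b ≤ ∑ i, ∑ j, P i j * G i j := by
  apply csInf_le
  · refine ⟨0, ?_⟩
    rintro c ⟨Q, hQ0, -, -, rfl⟩
    exact Finset.sum_nonneg fun i _ => Finset.sum_nonneg fun j _ =>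
      mul_nonneg (hQ0 i j) (hG i j)
  · exact ⟨P, h0, hr, hc, rfl⟩

lemma OT_near {m n : ℕ} (G : Fin m → Fin n → ℝ) (hm : 0 < m) (hn : 0 < n)
    {ε : ℝ} (hε : 0 < ε) :
    ∃ P : Fin m → Fin n → ℝ, (∀ i j, 0 ≤ P i j) ∧ (∀ i, ∑ j, P i j = 1 / m) ∧
      (∀ j, ∑ i, P i j = 1 / n) ∧
      ∑ i, ∑ j, P i j * G i j < OT G (fun _ => 1 / m) (fun _ => 1 / n) + ε := by
  have hm' : (m : ℝ) ≠ 0 := Nat.cast_ne_zero.mpr hm.ne'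
  have hn' : (n : ℝ) ≠ 0 := Nat.cast_ne_zero.mpr hn.ne'
  have hne : { c : ℝ | ∃ P : Fin m → Fin n → ℝ,
      (∀ i j, 0 ≤ P i j) ∧ (∀ i, ∑ j, P i j = (fun _ => 1 / (m:ℝ)) i) ∧
      (∀ j, ∑ i, P i j = (fun _ => 1 / (n:ℝ)) j) ∧
      c = ∑ i, ∑ j, P i j * G i j }.Nonempty := by
    refine ⟨_, fun _ _ => (1/(m:ℝ)) * (1/(n:ℝ)), fun _ _ => by positivity, ?_, ?_, rfl⟩
    · intro i; simp [Finset.sum_const]; field_simp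
    · intro j; simp [Finset.sum_const]; field_simp
  obtain ⟨c, hc, hlt⟩ := Real.lt_sInf_add_pos hne hε
  obtain ⟨P, h0, hr, hc', rfl⟩ := hc
  exact ⟨P, h0, hr, hc', hlt⟩

lemma key_ineq {B N D : ℕ} (hB : 0 < B) (hN : 0 < N)
    (Z : Fin N → EuclideanSpace ℝ (Fin D)) (i : Fin B → Fin N)
    (q : (Fin B → Fin N) → ℝ) (hq0 : ∀ j, 0 ≤ q j)
    (hmarg : ∀ (l : Fin B) (n : Fin N),
      ∑ j ∈ Finset.univ.filter (fun j => j l = n), q j = 1 / N) :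
    OT (fun k n => ‖Z (i k) - Z n‖ ^ 2) (fun _ => 1 / B) (fun _ => 1 / N)
      ≤ ∑ j, q j * OT (fun k l => ‖Z (i k) - Z (j l)‖ ^ 2) (fun _ => 1 / B) (fun _ => 1 / B) := by
  classical
  have hB' : (B : ℝ) ≠ 0 := Nat.cast_ne_zero.mpr hB.ne'
  have hN' : (N : ℝ) ≠ 0 := Nat.cast_ne_zero.mpr hN.ne'
  have hq1 : ∑ j, q j = 1 := by
    have l0 : Fin B := ⟨0, hB⟩
    have h := Finset.sum_fiberwise_eq_sum_filter Finset.univ Finset.univ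
      (fun j : Fin B → Fin N => j l0) q
    simp only [Finset.mem_univ, Finset.filter_true] at h
    calc ∑ j, q j
        = ∑ n : Fin N, ∑ j ∈ Finset.univ.filter (fun j => j l0 = n), q j := by
          rw [h]
      _ = ∑ _n : Fin N, (1 / N : ℝ) := Finset.sum_congr rfl fun n _ => hmarg l0 n
      _ = 1 := by rw [Finset.sum_const]; simp; field_simp
  refine le_of_forall_sub_le fun ε hε => ?_
  rw [sub_le_iff_le_add]
  choose P hP0 hPr hPc hPcost using fun j : Fin B → Fin N =>
    OT_near (fun k l => ‖Z (i k) - Z (j l)‖ ^ 2) hB hB hε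
  set Q : Fin B → Fin N → ℝ :=
    fun k n => ∑ j, q j * ∑ l, if j l = n then P j k l else 0 with hQdef
  have hQ0 : ∀ k n, 0 ≤ Q k n := by
    intro k n
    refine Finset.sum_nonneg fun j _ => mul_nonneg (hq0 j) ?_
    refine Finset.sum_nonneg fun l _ => ?_
    split
    · exact hP0 j k l
    · exact le_rfl
  have hQr : ∀ k, ∑ n, Q k n = 1 / B := by
    intro k
    rw [Finset.sum_comm]
    have h : ∀ j : Fin B → Fin N,
        ∑ n, q j * ∑ l, (if j l = n then P j k l else 0) = q j * (1 / B) := by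
      intro j
      rw [← Finset.mul_sum, Finset.sum_comm]
      simp [Finset.sum_ite_eq, hPr j k]
    simp only [h, ← Finset.sum_mul, hq1, one_mul]
  have hQc : ∀ n, ∑ k, Q k n = 1 / N := by
    intro n
    rw [Finset.sum_comm]
    have step1 : ∀ j : Fin B → Fin N,
        ∑ k, q j * ∑ l, (if j l = n then P j k l else 0)
          = ∑ l, (if j l = n then q j * (1 / B : ℝ) else 0) := by
      intro j
      rw [← Finset.mul_sum, Finset.sum_comm, Finset.mul_sum]
      refine Finset.sum_congr rfl fun l _ => ?_
      by_cases hl : j l = n <;> simp [hl, hPc j l]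
    calc ∑ j, ∑ k, q j * ∑ l, (if j l = n then P j k l else 0)
        = ∑ j, ∑ l, (if j l = n then q j * (1 / B : ℝ) else 0) :=
          Finset.sum_congr rfl fun j _ => step1 j
      _ = ∑ l : Fin B, ∑ j, (if j l = n then q j * (1 / B : ℝ) else 0) := Finset.sum_comm
      _ = ∑ _l : Fin B, (1 / N : ℝ) * (1 / B) := by
          refine Finset.sum_congr rfl fun l _ => ?_
          rw [← Finset.sum_filter, ← Finset.sum_mul, hmarg l n]
      _ = 1 / N := by rw [Finset.sum_const]; simp; field_simp
  have hQcost : ∑ k, ∑ n, Q k n * ‖Z (i k) - Z n‖ ^ 2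
      = ∑ j, q j * ∑ k, ∑ l, P j k l * ‖Z (i k) - Z (j l)‖ ^ 2 := by
    have perk : ∀ k, ∑ n, Q k n * ‖Z (i k) - Z n‖ ^ 2
        = ∑ j, q j * ∑ l, P j k l * ‖Z (i k) - Z (j l)‖ ^ 2 := by
      intro k
      calc ∑ n, Q k n * ‖Z (i k) - Z n‖ ^ 2
          = ∑ n, ∑ j, (q j * ∑ l, if j l = n then P j k l else 0) * ‖Z (i k) - Z n‖ ^ 2 := by
            refine Finset.sum_congr rfl fun n _ => ?_
            rw [hQdef, Finset.sum_mul]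
        _ = ∑ j, ∑ n, (q j * ∑ l, if j l = n then P j k l else 0) * ‖Z (i k) - Z n‖ ^ 2 :=
            Finset.sum_comm
        _ = ∑ j, q j * ∑ l, P j k l * ‖Z (i k) - Z (j l)‖ ^ 2 := by
            refine Finset.sum_congr rfl fun j _ => ?_
            calc ∑ n, (q j * ∑ l, if j l = n then P j k l else 0) * ‖Z (i k) - Z n‖ ^ 2
                = q j * ∑ n, ∑ l, (if j l = n then P j k l * ‖Z (i k) - Z n‖ ^ 2 else 0) := by
                  rw [Finset.mul_sum]
                  refine Finset.sum_congr rfl fun n _ => ?_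
                  rw [mul_assoc]
                  congr 1
                  rw [Finset.sum_mul]
                  refine Finset.sum_congr rfl fun l _ => ?_
                  by_cases hl : j l = n <;> simp [hl]
              _ = q j * ∑ l, ∑ n, (if j l = n then P j k l * ‖Z (i k) - Z n‖ ^ 2 else 0) := by
                  rw [Finset.sum_comm]
              _ = q j * ∑ l, P j k l * ‖Z (i k) - Z (j l)‖ ^ 2 := by
                  congr 1
                  refine Finset.sum_congr rfl fun l _ => ?_
                  simp
    calc ∑ k, ∑ n, Q k n * ‖Z (i k) - Z n‖ ^ 2
        = ∑ k, ∑ j, q j * ∑ l, P j k l * ‖Z (i k) - Z (j l)‖ ^ 2 :=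
          Finset.sum_congr rfl fun k _ => perk k
      _ = ∑ j, ∑ k, q j * ∑ l, P j k l * ‖Z (i k) - Z (j l)‖ ^ 2 := Finset.sum_comm
      _ = ∑ j, q j * ∑ k, ∑ l, P j k l * ‖Z (i k) - Z (j l)‖ ^ 2 := by
          refine Finset.sum_congr rfl fun j _ => ?_
          rw [Finset.mul_sum]
  have hle := OT_le_cost (G := fun k n => ‖Z (i k) - Z n‖ ^ 2)
    (fun k n => by positivity) hQ0 hQr hQc
  refine hle.trans ?_
  rw [hQcost]
  calc ∑ j, q j * ∑ k, ∑ l, P j k l * ‖Z (i k) - Z (j l)‖ ^ 2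
      ≤ ∑ j, q j * (OT (fun k l => ‖Z (i k) - Z (j l)‖ ^ 2)
          (fun _ => 1 / B) (fun _ => 1 / B) + ε) := by
        refine Finset.sum_le_sum fun j _ => ?_
        exact mul_le_mul_of_nonneg_left (hPcost j).le (hq0 j)
    _ = ∑ j, q j * OT (fun k l => ‖Z (i k) - Z (j l)‖ ^ 2)
          (fun _ => 1 / B) (fun _ => 1 / B) + ε := by
        simp only [mul_add, Finset.sum_add_distrib, ← Finset.sum_mul, hq1, one_mul]

/-- Proposition 2: the expected squared 2-Wasserstein distance between the uniform
empirical measures of two independently sampled mini-batches is at least the expected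
squared 2-Wasserstein distance between the empirical measure of one mini-batch and the
uniform empirical measure of all `N` points. -/
theorem expected_minibatch_ot_ge_full (N B D : ℕ) (hN : 1 ≤ N) (hB : 1 ≤ B) (hD : 1 ≤ D)
    (Z : Fin N → EuclideanSpace ℝ (Fin D))
    {Ω : Type*} [MeasurableSpace Ω] (ℙ : Measure Ω) [IsProbabilityMeasure ℙ]
    (I J : Ω → (Fin B → Fin N)) (hI : Measurable I) (hJ : Measurable J)
    (hindep : ProbabilityTheory.IndepFun I J ℙ)
    (hunif : ∀ k : Fin B, ∀ i : Fin N, ℙ {ω | J ω k = i} = (N : ℝ≥0∞)⁻¹) :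
    ∫ ω, OT (fun k j => ‖Z (I ω k) - Z j‖ ^ 2) (fun _ => 1 / B) (fun _ => 1 / N) ∂ℙ ≤
      ∫ ω, OT (fun k l => ‖Z (I ω k) - Z (J ω l)‖ ^ 2) (fun _ => 1 / B) (fun _ => 1 / B) ∂ℙ := by
  classical
  have hB0 : 0 < B := hB
  have hN0 : 0 < N := hN
  set f : (Fin B → Fin N) → ℝ :=
    fun i => OT (fun k j => ‖Z (i k) - Z j‖ ^ 2) (fun _ => 1 / B) (fun _ => 1 / N) with hf
  set g : (Fin B → Fin N) → (Fin B → Fin N) → ℝ :=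
    fun i j => OT (fun k l => ‖Z (i k) - Z (j l)‖ ^ 2) (fun _ => 1 / B) (fun _ => 1 / B) with hg
  set pI : (Fin B → Fin N) → ℝ := fun i => (ℙ (I ⁻¹' {i})).toReal with hpI
  set qJ : (Fin B → Fin N) → ℝ := fun j => (ℙ (J ⁻¹' {j})).toReal with hqJ
  -- left integral
  have hL : ∫ ω, f (I ω) ∂ℙ = ∑ i, pI i * f i := by
    rw [← integral_map hI.aemeasurable Measurable.of_discrete.aestronglyMeasurable,
      integral_fintype (Integrable.of_finite)]
    refine Finset.sum_congr rfl fun i _ => ?_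
    rw [measureReal_def, Measure.map_apply hI (measurableSet_singleton i), smul_eq_mul]
  -- right integral
  have hT : Measurable fun ω => (I ω, J ω) := hI.prodMk hJ
  have hR : ∫ ω, g (I ω) (J ω) ∂ℙ = ∑ i, ∑ j, pI i * qJ j * g i j := by
    have : ∫ ω, g (I ω) (J ω) ∂ℙ
        = ∫ p : (Fin B → Fin N) × (Fin B → Fin N), g p.1 p.2
            ∂(ℙ.map fun ω => (I ω, J ω)) := by
      rw [integral_map hT.aemeasurable Measurable.of_discrete.aestronglyMeasurable]
    rw [this, integral_fintype (Integrable.of_finite), Fintype.sum_prod_type]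
    refine Finset.sum_congr rfl fun i _ => Finset.sum_congr rfl fun j _ => ?_
    have hpre : (fun ω => (I ω, J ω)) ⁻¹' {(i, j)} = I ⁻¹' {i} ∩ J ⁻¹' {j} := by
      ext ω; simp [Prod.ext_iff]
    rw [measureReal_def, Measure.map_apply hT (measurableSet_singleton (i, j)), hpre,
      hindep.measure_inter_preimage_eq_mul _ _ (measurableSet_singleton i)
        (measurableSet_singleton j), smul_eq_mul, ENNReal.toReal_mul]
  -- marginal condition for qJ
  have hqmarg : ∀ (l : Fin B) (n : Fin N),
      ∑ j ∈ Finset.univ.filter (fun j : Fin B → Fin N => j l = n), qJ j = 1 / N := by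
    intro l n
    have hunion : {ω | J ω l = n}
        = ⋃ j ∈ Finset.univ.filter (fun j : Fin B → Fin N => j l = n), J ⁻¹' {j} := by
      ext ω
      simp only [Set.mem_setOf_eq, Set.mem_iUnion, Finset.mem_filter, Finset.mem_univ,
        true_and, Set.mem_preimage, Set.mem_singleton_iff]
      constructor
      · intro h; exact ⟨J ω, h, rfl⟩
      · rintro ⟨j, hj, rfl⟩; exact hj
    have hdisj : (↑(Finset.univ.filter (fun j : Fin B → Fin N => j l = n)) : Set _).PairwiseDisjoint
        (fun j => J ⁻¹' {j}) := by
      intro a _ b _ hab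
      exact Set.disjoint_left.mpr fun ω ha hb => hab (by
        simp only [Set.mem_preimage, Set.mem_singleton_iff] at ha hb
        rw [← ha, ← hb])
    have hsum : ∑ j ∈ Finset.univ.filter (fun j : Fin B → Fin N => j l = n), ℙ (J ⁻¹' {j})
        = (N : ℝ≥0∞)⁻¹ := by
      rw [← measure_biUnion_finset hdisj (fun j _ => hJ (measurableSet_singleton j)),
        ← hunion, hunif l n]
    have := congrArg ENNReal.toReal hsum
    rw [ENNReal.toReal_sum (fun j _ => measure_ne_top ℙ _)] at this
    rw [this]
    simp [one_div]
  have hq0 : ∀ j, 0 ≤ qJ j := fun j => ENNReal.toReal_nonneg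
  have hkey : ∀ i, f i ≤ ∑ j, qJ j * g i j := fun i =>
    key_ineq hB0 hN0 Z i qJ hq0 hqmarg
  calc ∫ ω, OT (fun k j => ‖Z (I ω k) - Z j‖ ^ 2) (fun _ => 1 / B) (fun _ => 1 / N) ∂ℙ
      = ∑ i, pI i * f i := hL
    _ ≤ ∑ i, pI i * ∑ j, qJ j * g i j := by
        refine Finset.sum_le_sum fun i _ => ?_
        exact mul_le_mul_of_nonneg_left (hkey i) ENNReal.toReal_nonneg
    _ = ∑ i, ∑ j, pI i * qJ j * g i j := by
        refine Finset.sum_congr rfl fun i _ => ?_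
        rw [Finset.mul_sum]
        exact Finset.sum_congr rfl fun j _ => by ring
    _ = ∫ ω, g (I ω) (J ω) ∂ℙ := hR.symm
end

section
/- Let (S, d) be a separable metric space equipped with its Borel σ-algebra, let (Ω, 𝔽, ℙ) be a probability space, and let A, B : Ω → S be measurable random elements which are independent and identically distributed. Let m ∈ S and R > 0 be such that 0 ≤ d(A(ω), m) ≤ R almost surely. Then E[d(A,B)²] ≤ 4·(E[d(A,m)])² + (1/2)·R². (In the paper, m is the Wasserstein barycentre of the random empirical measure, R is the maximal distance to the barycentre, and this shows the expected loss is bounded above by a variance-like measure.) -/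
open MeasureTheory

/-- For i.i.d. random elements `A, B` of a separable metric space and a point `m` with
`d(A, m) ≤ R` almost surely, `E[d(A,B)²] ≤ 4 · (E[d(A,m)])² + (1/2) · R²`:
the expected loss is bounded above by a variance-like measure. -/
theorem expected_sq_dist_le_four_sq_add_half_R_sq {S : Type*} [MetricSpace S]
    [TopologicalSpace.SeparableSpace S] [MeasurableSpace S] [BorelSpace S]
    {Ω : Type*} [MeasurableSpace Ω] (ℙ : Measure Ω) [IsProbabilityMeasure ℙ]
    (A B : Ω → S) (hA : Measurable A) (hB : Measurable B)
    (hindep : ProbabilityTheory.IndepFun A B ℙ)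
    (hid : ProbabilityTheory.IdentDistrib A B ℙ ℙ)
    (m : S) (R : ℝ) (hR : 0 < R)
    (hbound : ∀ᵐ ω ∂ℙ, dist (A ω) m ≤ R) :
    ∫ ω, dist (A ω) (B ω) ^ 2 ∂ℙ ≤
      4 * (∫ ω, dist (A ω) m ∂ℙ) ^ 2 + (1 / 2) * R ^ 2 := by
  have : SecondCountableTopology S := UniformSpace.secondCountable_of_separable S
  set X : Ω → ℝ := fun ω => dist (A ω) m with hXdef
  set Y : Ω → ℝ := fun ω => dist (B ω) m with hYdef
  have hf : Measurable (fun s : S => dist s m) := measurable_id.dist measurable_const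
  have hX : Measurable X := hf.comp hA
  have hY : Measurable Y := hf.comp hB
  have hXY : ProbabilityTheory.IdentDistrib X Y ℙ ℙ := hid.comp hf
  have hbX : ∀ᵐ ω ∂ℙ, X ω ≤ R := hbound
  -- transfer the bound to Y
  have hbY : ∀ᵐ ω ∂ℙ, Y ω ≤ R := by
    have hset : MeasurableSet {x : ℝ | R < x} := measurableSet_lt measurable_const measurable_id
    have h1 : ℙ {ω | Y ω ∈ {x : ℝ | R < x}} = ℙ {ω | X ω ∈ {x : ℝ | R < x}} :=
      (hXY.symm.measure_mem_eq hset)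
    have h2 : ℙ {ω | X ω ∈ {x : ℝ | R < x}} = 0 := by
      rw [MeasureTheory.ae_iff] at hbX
      simpa [not_le] using hbX
    rw [MeasureTheory.ae_iff]
    simpa using h1.trans h2
  -- integrability facts
  have hintX : Integrable X ℙ := by
    refine Integrable.mono' (integrable_const R) hX.aestronglyMeasurable ?_
    filter_upwards [hbX] with ω hω
    rwa [Real.norm_eq_abs, abs_of_nonneg dist_nonneg]
  have hintY : Integrable Y ℙ := by
    refine Integrable.mono' (integrable_const R) hY.aestronglyMeasurable ?_
    filter_upwards [hbY] with ω hω
    rwa [Real.norm_eq_abs, abs_of_nonneg dist_nonneg]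
  have hintX2 : Integrable (fun ω => X ω ^ 2) ℙ := by
    refine Integrable.mono' (integrable_const (R ^ 2)) (hX.pow_const 2).aestronglyMeasurable ?_
    filter_upwards [hbX] with ω hω
    rw [Real.norm_eq_abs, abs_of_nonneg (sq_nonneg _)]
    exact pow_le_pow_left₀ dist_nonneg hω 2
  have hintY2 : Integrable (fun ω => Y ω ^ 2) ℙ := by
    refine Integrable.mono' (integrable_const (R ^ 2)) (hY.pow_const 2).aestronglyMeasurable ?_
    filter_upwards [hbY] with ω hω
    rw [Real.norm_eq_abs, abs_of_nonneg (sq_nonneg _)]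
    exact pow_le_pow_left₀ dist_nonneg hω 2
  have hintXY : Integrable (fun ω => X ω * Y ω) ℙ := by
    refine Integrable.mono' (integrable_const (R * R))
      (hX.mul hY).aestronglyMeasurable ?_
    filter_upwards [hbX, hbY] with ω h1 h2
    rw [Real.norm_eq_abs, abs_of_nonneg (mul_nonneg dist_nonneg dist_nonneg)]
    exact mul_le_mul h1 h2 dist_nonneg hR.le
  have hintSum : Integrable (fun ω => (X ω + Y ω) ^ 2) ℙ := by
    have : (fun ω => (X ω + Y ω) ^ 2)
        = fun ω => X ω ^ 2 + (2 * (X ω * Y ω) + Y ω ^ 2) := by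
      funext ω; ring
    rw [this]
    exact hintX2.add ((hintXY.const_mul 2).add hintY2)
  have hintD : Integrable (fun ω => dist (A ω) (B ω) ^ 2) ℙ := by
    refine Integrable.mono' hintSum ((hA.dist hB).pow_const 2).aestronglyMeasurable ?_
    filter_upwards with ω
    rw [Real.norm_eq_abs, abs_of_nonneg (sq_nonneg _)]
    exact pow_le_pow_left₀ dist_nonneg (dist_triangle_right _ _ _) 2
  -- step 1: E[d(A,B)²] ≤ E[(X+Y)²]
  have step1 : ∫ ω, dist (A ω) (B ω) ^ 2 ∂ℙ ≤ ∫ ω, (X ω + Y ω) ^ 2 ∂ℙ := by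
    refine integral_mono_ae hintD hintSum ?_
    filter_upwards with ω
    exact pow_le_pow_left₀ dist_nonneg (dist_triangle_right _ _ _) 2
  -- step 2: expand
  have hindXY : ProbabilityTheory.IndepFun X Y ℙ := hindep.comp hf hf
  have hmul : ∫ ω, X ω * Y ω ∂ℙ = (∫ ω, X ω ∂ℙ) * ∫ ω, Y ω ∂ℙ :=
    hindXY.integral_fun_mul_eq_mul_integral hintX.aestronglyMeasurable hintY.aestronglyMeasurable
  have hEY : ∫ ω, Y ω ∂ℙ = ∫ ω, X ω ∂ℙ := hXY.symm.integral_eq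
  have hEY2 : ∫ ω, Y ω ^ 2 ∂ℙ = ∫ ω, X ω ^ 2 ∂ℙ :=
    ((hXY.comp (measurable_id.pow_const 2)).symm).integral_eq
  have step2 : ∫ ω, (X ω + Y ω) ^ 2 ∂ℙ
      = 2 * ∫ ω, X ω ^ 2 ∂ℙ + 2 * (∫ ω, X ω ∂ℙ) ^ 2 := by
    have hexp : (fun ω => (X ω + Y ω) ^ 2)
        = fun ω => X ω ^ 2 + (2 * (X ω * Y ω) + Y ω ^ 2) := by
      funext ω; ring
    have hint3 : Integrable (fun ω => 2 * (X ω * Y ω) + Y ω ^ 2) ℙ :=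
      (hintXY.const_mul 2).add hintY2
    have hint2 : Integrable (fun ω => 2 * (X ω * Y ω)) ℙ := hintXY.const_mul 2
    rw [hexp, integral_add hintX2 hint3, integral_add hint2 hintY2,
      integral_const_mul, hmul, hEY, hEY2]
    ring
  -- step 3: E[X²] ≤ R·E[X]
  have step3 : ∫ ω, X ω ^ 2 ∂ℙ ≤ R * ∫ ω, X ω ∂ℙ := by
    rw [← integral_const_mul]
    refine integral_mono_ae hintX2 (hintX.const_mul R) ?_
    filter_upwards [hbX] with ω hω
    have : X ω ^ 2 = X ω * X ω := sq (X ω)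
    nlinarith [dist_nonneg (x := A ω) (y := m)]
  have hEX : (0:ℝ) ≤ ∫ ω, X ω ∂ℙ := integral_nonneg fun ω => dist_nonneg
  nlinarith [step1, step2, step3, sq_nonneg (R - 2 * ∫ ω, X ω ∂ℙ)]
end

section
/- (Appendix Lemma of the paper.) Let B, B' ≥ 1, D ≥ 1, and let X¹, X² : Fin B → ℝ^D and X³, X⁴ : Fin B' → ℝ^D be tuples of points. Let X¹∪X³ and X²∪X⁴ denote the concatenated tuples Fin (B+B') → ℝ^D. Then M(X¹∪X³, X²∪X⁴) ≤ M(X¹, X²) + M(X³, X⁴), i.e., (B+B')·W₂²(μ(X¹∪X³), μ(X²∪X⁴)) ≤ B·W₂²(μ(X¹), μ(X²)) + B'·W₂²(μ(X³), μ(X⁴)), where W₂² between uniform empirical measures of equal-size tuples of size m equals (1/m) times the optimal matching cost. -/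
open scoped BigOperators

/-- Optimal matching cost between two equal-size tuples of points in Euclidean space:
the minimum over permutations `π` of `Σ_i ‖X i − Y (π i)‖²`. For tuples of size `m`,
`(1/m) · matchCost X Y` is the squared 2-Wasserstein distance between the uniform
empirical measures of `X` and `Y`. -/
noncomputable def matchCost {m D : ℕ} (X Y : Fin m → EuclideanSpace ℝ (Fin D)) : ℝ :=
  ⨅ π : Equiv.Perm (Fin m), ∑ i, ‖X i - Y (π i)‖ ^ 2

theorem Fin.sum_append_permCongr_sumCongr {m n : ℕ} {α M : Type*} [AddCommMonoid M]
    (f : α → α → M) (X₁ X₂ : Fin m → α) (X₃ X₄ : Fin n → α)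
    (π : Equiv.Perm (Fin m)) (σ : Equiv.Perm (Fin n)) :
    ∑ i, f (Fin.append X₁ X₃ i) (Fin.append X₂ X₄ (finSumFinEquiv.permCongr (π.sumCongr σ) i)) =
      ∑ i, f (X₁ i) (X₂ (π i)) + ∑ i, f (X₃ i) (X₄ (σ i)) := by
  rw [← finSumFinEquiv.sum_comp, Fintype.sum_sum_type]
  simp [Equiv.permCongr_apply]

namespace matchCost

variable {m D : ℕ} (X Y : Fin m → EuclideanSpace ℝ (Fin D))

theorem le_sum (π : Equiv.Perm (Fin m)) : matchCost X Y ≤ ∑ i, ‖X i - Y (π i)‖ ^ 2 :=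
  ciInf_le (Set.finite_range _).bddBelow π

theorem exists_perm_eq_sum : ∃ π : Equiv.Perm (Fin m), matchCost X Y = ∑ i, ‖X i - Y (π i)‖ ^ 2 := by
  obtain ⟨π, hπ⟩ := Finite.exists_min fun π : Equiv.Perm (Fin m) ↦ ∑ i, ‖X i - Y (π i)‖ ^ 2
  exact ⟨π, (le_sum X Y π).antisymm (le_ciInf hπ)⟩

end matchCost

theorem matchCost_append_le_general (B B' D : ℕ)
    (X₁ X₂ : Fin B → EuclideanSpace ℝ (Fin D))
    (X₃ X₄ : Fin B' → EuclideanSpace ℝ (Fin D)) :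
    matchCost (Fin.append X₁ X₃) (Fin.append X₂ X₄) ≤ matchCost X₁ X₂ + matchCost X₃ X₄ := by
  obtain ⟨π, hπ⟩ := matchCost.exists_perm_eq_sum X₁ X₂
  obtain ⟨σ, hσ⟩ := matchCost.exists_perm_eq_sum X₃ X₄
  calc matchCost (Fin.append X₁ X₃) (Fin.append X₂ X₄)
      ≤ _ := matchCost.le_sum _ _ (finSumFinEquiv.permCongr (π.sumCongr σ))
    _ = matchCost X₁ X₂ + matchCost X₃ X₄ := by
      rw [Fin.sum_append_permCongr_sumCongr (fun x y ↦ ‖x - y‖ ^ 2), hπ, hσ]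

/-- Appendix Lemma: `(B+B') · W₂²(μ(X¹∪X³), μ(X²∪X⁴)) ≤ B · W₂²(μ(X¹), μ(X²)) +
B' · W₂²(μ(X³), μ(X⁴))`, stated via the (unnormalized) optimal matching costs. -/
theorem matchCost_append_le (B B' D : ℕ) (hB : 1 ≤ B) (hB' : 1 ≤ B') (hD : 1 ≤ D)
    (X₁ X₂ : Fin B → EuclideanSpace ℝ (Fin D))
    (X₃ X₄ : Fin B' → EuclideanSpace ℝ (Fin D)) :
    matchCost (Fin.append X₁ X₃) (Fin.append X₂ X₄) ≤ matchCost X₁ X₂ + matchCost X₃ X₄ :=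
  matchCost_append_le_general B B' D X₁ X₂ X₃ X₄
end
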